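/- If |Ψ⟩ = |ψ_{PS R1}⟩ ⊗ |ψ_{B R2}⟩ is a product of pure states across the split (P,S,R1) vs (B,R2), then tr_P|Ψ⟩⟨Ψ| = (tr_P|ψ_{PS R1}⟩⟨ψ_{PS R1}|) ⊗ |ψ_{B R2}⟩⟨ψ_{B R2}|, and E_F between S⊗B and R1⊗R2 of this state equals E_F^{S-R1}(tr_P|ψ_{PS R1}⟩⟨ψ_{PS R1}|) + S(tr_{R2}|ψ_{B R2}⟩⟨ψ_{B R2}|). -/

import Mathlib

open Matrix BigOperators
open scoped Kronecker ComplexOrder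

noncomputable section

/-- A density matrix: positive semidefinite with unit trace. -/
def IsDensityMatrix {n : Type*} [Fintype n] (ρ : Matrix n n ℂ) : Prop :=
  ρ.PosSemidef ∧ ρ.trace = 1

/-- von Neumann entropy `S(ρ) = -tr(ρ log ρ)`, computed via the eigenvalues
(with the convention `0 log 0 = 0`); junk value `0` for non-Hermitian input. -/
noncomputable def vnEntropy {n : Type*} [Fintype n] [DecidableEq n]
    (ρ : Matrix n n ℂ) : ℝ :=
  if h : ρ.IsHermitian then -∑ i, h.eigenvalues i * Real.log (h.eigenvalues i) else 0

/-- Matrix logarithm of a Hermitian matrix (taken on the support / spectrum);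
junk value `0` for non-Hermitian input. -/
noncomputable def matLog {n : Type*} [Fintype n] [DecidableEq n]
    (ρ : Matrix n n ℂ) : Matrix n n ℂ :=
  if h : ρ.IsHermitian then
    (h.eigenvectorUnitary : Matrix n n ℂ) *
      Matrix.diagonal (fun i => (Real.log (h.eigenvalues i) : ℂ)) *
      star (h.eigenvectorUnitary : Matrix n n ℂ)
  else 0

/-- Quantum relative entropy `D(ρ‖σ) = tr[ρ (log ρ - log σ)]`. -/
noncomputable def relEntropy {n : Type*} [Fintype n] [DecidableEq n]
    (ρ σ : Matrix n n ℂ) : ℝ :=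
  ((ρ * (matLog ρ - matLog σ)).trace).re

/-- The rank-one projector `|ψ⟩⟨ψ|` associated with a vector `ψ`. -/
def pureState {n : Type*} (ψ : n → ℂ) : Matrix n n ℂ :=
  Matrix.vecMulVec ψ (star ψ)

/-- Partial trace over the first tensor factor. -/
noncomputable def trFst {a b : Type*} [Fintype a]
    (M : Matrix (a × b) (a × b) ℂ) : Matrix b b ℂ :=
  Matrix.of fun i j => ∑ k, M (k, i) (k, j)

/-- Partial trace over the second tensor factor. -/
noncomputable def trSnd {a b : Type*} [Fintype b]
    (M : Matrix (a × b) (a × b) ℂ) : Matrix a a ℂ :=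
  Matrix.of fun i j => ∑ k, M (i, k) (j, k)

/-- `ψ` is a unit vector. -/
def IsUnitVec {n : Type*} [Fintype n] (ψ : n → ℂ) : Prop :=
  ∑ i, Complex.normSq (ψ i) = 1

/-- Entanglement entropy of a bipartite pure state:
the entropy of the reduced state on the first factor. -/
noncomputable def entEntropy {a b : Type*} [Fintype a] [Fintype b] [DecidableEq a]
    (ψ : a × b → ℂ) : ℝ :=
  vnEntropy (trSnd (pureState ψ))

/-- Entanglement of formation: infimum of the average pure-state entanglement
entropy over all finite pure-state decompositions of `ρ`. -/
noncomputable def entFormation {a b : Type*} [Fintype a] [Fintype b]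
    [DecidableEq a] (ρ : Matrix (a × b) (a × b) ℂ) : ℝ :=
  sInf { x | ∃ (m : ℕ) (q : Fin m → ℝ) (φ : Fin m → a × b → ℂ),
    (∀ j, 0 ≤ q j) ∧ (∑ j, q j = 1) ∧ (∀ j, IsUnitVec (φ j)) ∧
    ρ = ∑ j, (q j : ℂ) • pureState (φ j) ∧
    x = ∑ j, q j * entEntropy (φ j) }

/-- `e` is an orthonormal basis (given as a family of vectors) of the space `n → ℂ`. -/
def IsONBasis {ι n : Type*} [Fintype ι] [Fintype n] [DecidableEq ι] [DecidableEq n]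
    (e : ι → n → ℂ) : Prop :=
  (∀ a b, ∑ x, (starRingEnd ℂ) (e a x) * e b x = if a = b then 1 else 0) ∧
  (∀ x y, ∑ a, e a x * (starRingEnd ℂ) (e a y) = if x = y then 1 else 0)

/-- The binary entropy function. -/
noncomputable def binEnt (x : ℝ) : ℝ :=
  -(x * Real.log x) - (1 - x) * Real.log (1 - x)

end

/-!
Tracing out `P` leaves `ρ ⊗ |ψ⟩⟨ψ|` with `ρ = tr_P |ψ_{PSR1}⟩⟨ψ_{PSR1}|` and `ψ = ψ_{BR2}`.
Pure-state decompositions of `ρ ⊗ |ψ⟩⟨ψ|` correspond to those of `ρ`: sandwiching the mixture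
between copies of the projector `1 ⊗ (1 - |ψ⟩⟨ψ|)` gives `0`, so every pure state of positive
weight is annihilated by it, i.e. is a product `φ ⊗ ψ`. Across `(S⊗B) | (R1⊗R2)` the reduced
state of `φ ⊗ ψ` is the Kronecker product of the reduced states of `φ` and `ψ`, and von Neumann
entropy is additive on Kronecker products of density matrices (the eigenvalues multiply, as the
characteristic polynomials show). Hence the set of average entanglements of the product state is
that of `ρ` shifted by `S(tr_{R2} |ψ⟩⟨ψ|)`, and so is its infimum.
-/

section PureStates

variable {n : Type*} [Fintype n]

@[simp]
lemma pureState_apply {m : Type*} (ψ : m → ℂ) (i j : m) :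
    pureState ψ i j = ψ i * star (ψ j) := rfl

lemma trace_pureState (ψ : n → ℂ) :
    (pureState ψ).trace = ((∑ i, Complex.normSq (ψ i) : ℝ) : ℂ) := by
  simp [Matrix.trace, Complex.mul_conj]

lemma IsUnitVec.pureState_mul_self {ψ : n → ℂ} (hψ : IsUnitVec ψ) :
    pureState ψ * pureState ψ = pureState ψ := by
  have : star ψ ⬝ᵥ ψ = 1 := by
    simp [dotProduct, mul_comm, Complex.mul_conj, ← Complex.ofReal_sum,
      show ∑ i, Complex.normSq (ψ i) = 1 from hψ]
  rw [pureState, vecMulVec_mul_vecMulVec, this, one_smul]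

lemma mul_pureState_mul_conjTranspose {m : Type*} (A : Matrix m n ℂ) (ψ : n → ℂ) :
    A * pureState ψ * Aᴴ = pureState (A *ᵥ ψ) := by
  rw [pureState, mul_vecMulVec, vecMulVec_mul, pureState, star_mulVec]

lemma IsUnitVec.comp_equiv {m : Type*} [Fintype m] {ψ : n → ℂ} (hψ : IsUnitVec ψ) (e : m ≃ n) :
    IsUnitVec (ψ ∘ e) :=
  (e.sum_comp fun i => Complex.normSq (ψ i)).trans hψ

lemma exists_isUnitVec [Nonempty n] : ∃ ψ : n → ℂ, IsUnitVec ψ := by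
  classical
  exact ⟨Pi.single (Classical.arbitrary n) 1, by simp [IsUnitVec, Pi.single_apply]⟩

end PureStates

def vecKron {α β : Type*} (f : α → ℂ) (g : β → ℂ) : α × β → ℂ := fun x => f x.1 * g x.2

section VecKron

variable {α β γ δ : Type*}

lemma sum_normSq_vecKron [Fintype α] [Fintype β] (f : α → ℂ) (g : β → ℂ) :
    ∑ x, Complex.normSq (vecKron f g x) =
      (∑ a, Complex.normSq (f a)) * ∑ b, Complex.normSq (g b) := by
  simp only [vecKron, Complex.normSq_mul, Fintype.sum_prod_type, Finset.sum_mul_sum]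

lemma isUnitVec_vecKron [Fintype α] [Fintype β] {f : α → ℂ} {g : β → ℂ} (hf : IsUnitVec f)
    (hg : IsUnitVec g) : IsUnitVec (vecKron f g) := by
  rw [IsUnitVec, sum_normSq_vecKron, hf, hg, one_mul]

lemma IsUnitVec.of_vecKron [Fintype α] [Fintype β] {f : α → ℂ} {g : β → ℂ}
    (h : IsUnitVec (vecKron f g)) (hg : IsUnitVec g) : IsUnitVec f := by
  rw [IsUnitVec, sum_normSq_vecKron, hg, mul_one] at h
  exact h

lemma pureState_vecKron (f : α → ℂ) (g : β → ℂ) :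
    pureState (vecKron f g) = pureState f ⊗ₖ pureState g := by
  ext x y
  simp only [pureState_apply, vecKron, kroneckerMap_apply, star_mul']
  ring

lemma trSnd_pureState_vecKron_comp_prodProdProdComm [Fintype γ] [Fintype δ]
    (f : α × γ → ℂ) (g : β × δ → ℂ) :
    trSnd (pureState (vecKron f g ∘ Equiv.prodProdProdComm α β γ δ)) =
      trSnd (pureState f) ⊗ₖ trSnd (pureState g) := by
  ext x y
  simp only [trSnd, of_apply, kroneckerMap_apply, pureState_apply, Function.comp_apply,
    Equiv.prodProdProdComm_apply, vecKron, Fintype.sum_prod_type, Finset.sum_mul_sum, star_mul']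
  refine Finset.sum_congr rfl fun _ _ => Finset.sum_congr rfl fun _ _ => ?_
  ring

end VecKron

section PartialTrace

variable {α β : Type*}

lemma trSnd_kronecker [Fintype β] (A : Matrix α α ℂ) (B : Matrix β β ℂ) :
    trSnd (A ⊗ₖ B) = B.trace • A := by
  ext i j
  simp [trSnd, Matrix.trace, Finset.mul_sum, mul_comm]

lemma trSnd_pureState_eq_mul_conjTranspose [Fintype β] (φ : α × β → ℂ) :
    trSnd (pureState φ) = of (Function.curry φ) * (of (Function.curry φ))ᴴ := by
  ext i j
  simp [trSnd, mul_apply]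

lemma isDensityMatrix_trSnd_pureState [Fintype α] [Fintype β] {φ : α × β → ℂ} (hφ : IsUnitVec φ) :
    IsDensityMatrix (trSnd (pureState φ)) := by
  refine ⟨?_, ?_⟩
  · rw [trSnd_pureState_eq_mul_conjTranspose]
    exact posSemidef_self_mul_conjTranspose _
  · simp only [Matrix.trace, diag, trSnd, of_apply, pureState_apply, Complex.star_def,
      Complex.mul_conj, ← Complex.ofReal_sum, ← Fintype.sum_prod_type']
    exact_mod_cast hφ

lemma trFst_pureState_eq_trSnd_swap [Fintype α] (φ : α × β → ℂ) :
    trFst (pureState φ) = trSnd (pureState (φ ∘ Prod.swap)) := rfl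

lemma isDensityMatrix_trFst_pureState [Fintype α] [Fintype β] {φ : α × β → ℂ}
    (hφ : IsUnitVec φ) : IsDensityMatrix (trFst (pureState φ)) := by
  have hswap := hφ.comp_equiv (Equiv.prodComm β α)
  rw [Equiv.coe_prodComm] at hswap
  rw [trFst_pureState_eq_trSnd_swap]
  exact isDensityMatrix_trSnd_pureState hswap

lemma trFst_pureState_eq_kronecker [Fintype α] {γ : Type*} {Ψ : α × (β × γ) → ℂ} {φ : α × β → ℂ}
    {χ : γ → ℂ} (hΨ : ∀ a x y, Ψ (a, (x, y)) = φ (a, x) * χ y) :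
    trFst (pureState Ψ) = trFst (pureState φ) ⊗ₖ pureState χ := by
  ext ⟨x, y⟩ ⟨x', y'⟩
  simp only [trFst, of_apply, kroneckerMap_apply, pureState_apply, hΨ, star_mul',
    Finset.sum_mul]
  refine Finset.sum_congr rfl fun _ _ => ?_
  ring

end PartialTrace

section Entropy

open Polynomial

variable {m n : Type*} [Fintype m] [Fintype n]

lemma IsDensityMatrix.kronecker {A : Matrix m m ℂ} {B : Matrix n n ℂ} (hA : IsDensityMatrix A)
    (hB : IsDensityMatrix B) : IsDensityMatrix (A ⊗ₖ B) :=
  ⟨hA.1.kronecker hB.1, by rw [trace_kronecker, hA.2, hB.2, one_mul]⟩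

variable [DecidableEq m] [DecidableEq n]

lemma vnEntropy_eq_sum_negMulLog {A : Matrix n n ℂ} (hA : A.IsHermitian) :
    vnEntropy A = ∑ i, Real.negMulLog (hA.eigenvalues i) := by
  simp [vnEntropy, hA, Real.negMulLog, Finset.sum_neg_distrib]

lemma IsDensityMatrix.sum_eigenvalues {ρ : Matrix n n ℂ} (hρ : IsDensityMatrix ρ) :
    ∑ i, hρ.1.1.eigenvalues i = 1 := by
  have h := hρ.1.1.trace_eq_sum_eigenvalues.symm.trans hρ.2
  simp only [Complex.coe_algebraMap, ← Complex.ofReal_sum] at h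
  exact_mod_cast h

lemma IsDensityMatrix.eigenvalues_le_one {ρ : Matrix n n ℂ} (hρ : IsDensityMatrix ρ) (i : n) :
    hρ.1.1.eigenvalues i ≤ 1 :=
  hρ.sum_eigenvalues ▸ Finset.single_le_sum (fun j _ => hρ.1.eigenvalues_nonneg j)
    (Finset.mem_univ i)

lemma vnEntropy_nonneg {ρ : Matrix n n ℂ} (hρ : IsDensityMatrix ρ) : 0 ≤ vnEntropy ρ := by
  rw [vnEntropy_eq_sum_negMulLog hρ.1.1]
  exact Finset.sum_nonneg fun i _ =>
    Real.negMulLog_nonneg (hρ.1.eigenvalues_nonneg i) (hρ.eigenvalues_le_one i)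

lemma charpoly_unitary_conj {U : Matrix n n ℂ} (hU : U ∈ unitary (Matrix n n ℂ))
    (D : Matrix n n ℂ) : (U * D * star U).charpoly = D.charpoly := by
  rw [charpoly_mul_comm, ← mul_assoc, Unitary.star_mul_self_of_mem hU, one_mul]

lemma Matrix.IsHermitian.charpoly_kronecker {A : Matrix m m ℂ} {B : Matrix n n ℂ}
    (hA : A.IsHermitian) (hB : B.IsHermitian) :
    (A ⊗ₖ B).charpoly =
      ∏ x : m × n, (X - C ((hA.eigenvalues x.1 * hB.eigenvalues x.2 : ℝ) : ℂ)) := by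
  set U := (hA.eigenvectorUnitary : Matrix m m ℂ)
  set V := (hB.eigenvectorUnitary : Matrix n n ℂ)
  have hdiag : A ⊗ₖ B = (U ⊗ₖ V) *
      (diagonal (RCLike.ofReal ∘ hA.eigenvalues) ⊗ₖ diagonal (RCLike.ofReal ∘ hB.eigenvalues)) *
      star (U ⊗ₖ V) := by
    conv_lhs => rw [hA.spectral_theorem, hB.spectral_theorem, Unitary.conjStarAlgAut_apply,
      Unitary.conjStarAlgAut_apply]
    simp only [star_eq_conjTranspose, conjTranspose_kronecker, mul_kronecker_mul]
    rfl
  rw [hdiag, charpoly_unitary_conj (kronecker_mem_unitary hA.eigenvectorUnitary.2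
    hB.eigenvectorUnitary.2), diagonal_kronecker_diagonal, charpoly_diagonal]
  simp

lemma Matrix.IsHermitian.sum_eigenvalues_eq_of_charpoly_eq {A : Matrix n n ℂ}
    (hA : A.IsHermitian) {ι : Type*} [Fintype ι] (d : ι → ℝ)
    (h : A.charpoly = ∏ i, (X - C (d i : ℂ))) (g : ℝ → ℝ) :
    ∑ i, g (hA.eigenvalues i) = ∑ i, g (d i) := by
  have hroots := hA.roots_charpoly_eq_eigenvalues
  rw [h, Polynomial.roots_prod _ _ (by simp [Finset.prod_ne_zero_iff, X_sub_C_ne_zero])] at hroots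
  simp only [roots_X_sub_C, Multiset.bind_singleton, Complex.coe_algebraMap,
    Function.comp_apply] at hroots
  simpa [Function.comp_def] using congrArg (fun s => (s.map (g ∘ Complex.re)).sum) hroots.symm

lemma vnEntropy_kronecker {A : Matrix m m ℂ} {B : Matrix n n ℂ} (hA : IsDensityMatrix A)
    (hB : IsDensityMatrix B) : vnEntropy (A ⊗ₖ B) = vnEntropy A + vnEntropy B := by
  have hAB := hA.kronecker hB
  rw [vnEntropy_eq_sum_negMulLog hAB.1.1, vnEntropy_eq_sum_negMulLog hA.1.1,
    vnEntropy_eq_sum_negMulLog hB.1.1,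
    hAB.1.1.sum_eigenvalues_eq_of_charpoly_eq _ (hA.1.1.charpoly_kronecker hB.1.1),
    Fintype.sum_prod_type]
  simp only [Real.negMulLog_mul, Finset.sum_add_distrib, ← Finset.sum_mul, ← Finset.mul_sum,
    hA.sum_eigenvalues, hB.sum_eigenvalues, one_mul]

end Entropy

section EntanglementEntropy

variable {α β γ δ : Type*} [Fintype α] [Fintype β] [Fintype γ] [Fintype δ]

lemma entEntropy_nonneg [DecidableEq α] {φ : α × β → ℂ} (hφ : IsUnitVec φ) :
    0 ≤ entEntropy φ :=
  vnEntropy_nonneg (isDensityMatrix_trSnd_pureState hφ)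

lemma entEntropy_vecKron_comp_prodProdProdComm [DecidableEq α] [DecidableEq β]
    {f : α × γ → ℂ} {g : β × δ → ℂ} (hf : IsUnitVec f) (hg : IsUnitVec g) :
    entEntropy (vecKron f g ∘ Equiv.prodProdProdComm α β γ δ) = entEntropy f + entEntropy g := by
  rw [entEntropy, trSnd_pureState_vecKron_comp_prodProdProdComm]
  exact vnEntropy_kronecker (isDensityMatrix_trSnd_pureState hf)
    (isDensityMatrix_trSnd_pureState hg)

lemma sum_mul_entEntropy_vecKron_comp_prodProdProdComm [DecidableEq α] [DecidableEq β] {m : ℕ}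
    {q : Fin m → ℝ} (hq : ∑ j, q j = 1) {φ : Fin m → α × γ → ℂ} (hφ : ∀ j, IsUnitVec (φ j))
    {ψ : β × δ → ℂ} (hψ : IsUnitVec ψ) :
    ∑ j, q j * entEntropy (vecKron (φ j) ψ ∘ Equiv.prodProdProdComm α β γ δ) =
      ∑ j, q j * entEntropy (φ j) + entEntropy ψ := by
  simp only [entEntropy_vecKron_comp_prodProdProdComm (hφ _) hψ, mul_add, Finset.sum_add_distrib,
    ← Finset.sum_mul, hq, one_mul]

end EntanglementEntropy

section Decompositions

variable {ι α β : Type*} [Fintype ι]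

lemma eq_zero_of_sum_smul_pureState_eq_zero [Fintype α] {q : ι → ℝ} (hq : ∀ j, 0 ≤ q j)
    {v : ι → α → ℂ} (h : ∑ j, (q j : ℂ) • pureState (v j) = 0) {j : ι} (hj : q j ≠ 0) :
    v j = 0 := by
  have htr := congrArg Matrix.trace h
  simp only [trace_sum, trace_smul, trace_pureState, trace_zero, smul_eq_mul,
    ← Complex.ofReal_mul, ← Complex.ofReal_sum, Complex.ofReal_eq_zero] at htr
  have hj' := (Finset.sum_eq_zero_iff_of_nonneg fun i _ =>
    mul_nonneg (hq i) (Finset.sum_nonneg fun _ _ => Complex.normSq_nonneg _)).mp htr j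
    (Finset.mem_univ j)
  have hsum := (mul_eq_zero.mp hj').resolve_left hj
  funext x
  exact Complex.normSq_eq_zero.mp ((Finset.sum_eq_zero_iff_of_nonneg fun _ _ =>
    Complex.normSq_nonneg _).mp hsum x (Finset.mem_univ x))

def innerSnd [Fintype β] (ψ : β → ℂ) (Φ : α × β → ℂ) : α → ℂ := fun x => ∑ y, star (ψ y) * Φ (x, y)

lemma one_kronecker_pureState_mulVec [Fintype α] [Fintype β] [DecidableEq α] (ψ : β → ℂ)
    (Φ : α × β → ℂ) :
    ((1 : Matrix α α ℂ) ⊗ₖ pureState ψ) *ᵥ Φ = vecKron (innerSnd ψ Φ) ψ := by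
  ext ⟨x, y⟩
  simp [mulVec, dotProduct, Fintype.sum_prod_type, one_apply, innerSnd, vecKron, Finset.sum_mul,
    mul_assoc, mul_comm (ψ y)]

lemma eq_vecKron_innerSnd_of_kronecker_pureState_eq_sum [Fintype α] [Fintype β] {ρ : Matrix α α ℂ}
    {ψ : β → ℂ} (hψ : IsUnitVec ψ) {q : ι → ℝ} (hq : ∀ j, 0 ≤ q j) {Φ : ι → α × β → ℂ}
    (h : ρ ⊗ₖ pureState ψ = ∑ j, (q j : ℂ) • pureState (Φ j)) {j : ι} (hj : q j ≠ 0) :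
    Φ j = vecKron (innerSnd ψ (Φ j)) ψ := by
  classical
  set Q : Matrix (α × β) (α × β) ℂ := 1 - (1 : Matrix α α ℂ) ⊗ₖ pureState ψ
  have hQ : Q * (ρ ⊗ₖ pureState ψ) * Qᴴ = 0 := by
    rw [sub_mul, Matrix.one_mul, ← mul_kronecker_mul, Matrix.one_mul, hψ.pureState_mul_self,
      sub_self, zero_mul]
  rw [h, Finset.mul_sum, Finset.sum_mul] at hQ
  simp only [mul_smul_comm, smul_mul_assoc, mul_pureState_mul_conjTranspose] at hQ
  have hQΦ := eq_zero_of_sum_smul_pureState_eq_zero hq hQ hj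
  rwa [sub_mulVec, one_mulVec, one_kronecker_pureState_mulVec, sub_eq_zero] at hQΦ

lemma eq_of_kronecker_pureState_eq [Fintype β] {A B : Matrix α α ℂ} {ψ : β → ℂ} (hψ : IsUnitVec ψ)
    (h : A ⊗ₖ pureState ψ = B ⊗ₖ pureState ψ) : A = B := by
  simpa [trSnd_kronecker, trace_pureState, show ∑ i, Complex.normSq (ψ i) = 1 from hψ]
    using congrArg trSnd h

lemma sum_smul_pureState_kronecker_pureState (q : ι → ℝ) (φ : ι → α → ℂ) (ψ : β → ℂ) :
    (∑ j, (q j : ℂ) • pureState (φ j)) ⊗ₖ pureState ψ =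
      ∑ j, (q j : ℂ) • pureState (vecKron (φ j) ψ) := by
  ext x y
  simp [pureState_vecKron, Matrix.sum_apply, Finset.sum_mul, mul_assoc]

lemma submatrix_sum_smul_pureState {κ : Type*} (q : ι → ℝ) (Φ : ι → α → ℂ) (e : κ → α) :
    (∑ j, (q j : ℂ) • pureState (Φ j)).submatrix e e = ∑ j, (q j : ℂ) • pureState (Φ j ∘ e) := by
  ext x y
  simp [Matrix.sum_apply]

end Decompositions

section EntanglementOfFormation

variable {α γ : Type*} [Fintype α] [Fintype γ]

def entFormationSet [DecidableEq α] (ρ : Matrix (α × γ) (α × γ) ℂ) : Set ℝ :=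
  { x | ∃ (m : ℕ) (q : Fin m → ℝ) (φ : Fin m → α × γ → ℂ),
    (∀ j, 0 ≤ q j) ∧ (∑ j, q j = 1) ∧ (∀ j, IsUnitVec (φ j)) ∧
    ρ = ∑ j, (q j : ℂ) • pureState (φ j) ∧
    x = ∑ j, q j * entEntropy (φ j) }

lemma entFormation_eq_sInf [DecidableEq α] (ρ : Matrix (α × γ) (α × γ) ℂ) :
    entFormation ρ = sInf (entFormationSet ρ) := rfl

lemma entFormationSet_bddBelow [DecidableEq α] (ρ : Matrix (α × γ) (α × γ) ℂ) :
    BddBelow (entFormationSet ρ) :=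
  ⟨0, by
    rintro _ ⟨m, q, φ, hq, -, hφ, -, rfl⟩
    exact Finset.sum_nonneg fun j _ => mul_nonneg (hq j) (entEntropy_nonneg (hφ j))⟩

lemma Matrix.IsHermitian.isUnitVec_eigenvectorBasis {n : Type*} [Fintype n] [DecidableEq n]
    {A : Matrix n n ℂ} (hA : A.IsHermitian) (i : n) : IsUnitVec ⇑(hA.eigenvectorBasis i) := by
  have h := hA.eigenvectorBasis.norm_eq_one i
  rw [EuclideanSpace.norm_eq, Real.sqrt_eq_one] at h
  simpa [IsUnitVec, Complex.normSq_eq_norm_sq] using h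

lemma Matrix.IsHermitian.eq_sum_smul_pureState {n : Type*} [Fintype n] [DecidableEq n]
    {A : Matrix n n ℂ} (hA : A.IsHermitian) :
    A = ∑ i, (hA.eigenvalues i : ℂ) • pureState ⇑(hA.eigenvectorBasis i) := by
  conv_lhs => rw [hA.spectral_theorem, Unitary.conjStarAlgAut_apply]
  ext x y
  simp [mul_apply, Matrix.sum_apply, diagonal_apply, mul_assoc, mul_left_comm]

lemma IsDensityMatrix.entFormationSet_nonempty [DecidableEq α] {ρ : Matrix (α × γ) (α × γ) ℂ}
    (hρ : IsDensityMatrix ρ) : (entFormationSet ρ).Nonempty := by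
  classical
  set e := (Fintype.equivFin (α × γ)).symm
  refine ⟨_, Fintype.card (α × γ), fun j => hρ.1.1.eigenvalues (e j),
    fun j => ⇑(hρ.1.1.eigenvectorBasis (e j)), fun j => hρ.1.eigenvalues_nonneg _, ?_,
    fun j => hρ.1.1.isUnitVec_eigenvectorBasis _, ?_, rfl⟩
  · rw [e.sum_comp (fun i => hρ.1.1.eigenvalues i), hρ.sum_eigenvalues]
  · rw [e.sum_comp (fun i => (hρ.1.1.eigenvalues i : ℂ) • pureState ⇑(hρ.1.1.eigenvectorBasis i))]
    exact hρ.1.1.eq_sum_smul_pureState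

end EntanglementOfFormation

section ProductWithPureState

variable {α β γ δ : Type*} [Fintype α] [Fintype β] [Fintype γ] [Fintype δ]
  [DecidableEq α] [DecidableEq β]

local notation "σ" => Equiv.prodProdProdComm α β γ δ

lemma image_add_entEntropy_subset_entFormationSet (ρ : Matrix (α × γ) (α × γ) ℂ)
    {ψ : β × δ → ℂ} (hψ : IsUnitVec ψ) :
    (· + entEntropy ψ) '' entFormationSet ρ ⊆
      entFormationSet ((ρ ⊗ₖ pureState ψ).submatrix σ σ) := by
  rintro _ ⟨_, ⟨m, q, φ, hq, hq1, hφ, rfl, rfl⟩, rfl⟩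
  refine ⟨m, q, fun j => vecKron (φ j) ψ ∘ σ, hq, hq1,
    fun j => (isUnitVec_vecKron (hφ j) hψ).comp_equiv _, ?_,
    (sum_mul_entEntropy_vecKron_comp_prodProdProdComm hq1 hφ hψ).symm⟩
  rw [sum_smul_pureState_kronecker_pureState, submatrix_sum_smul_pureState]

lemma entFormationSet_subset_image_add_entEntropy [Nonempty (α × γ)]
    (ρ : Matrix (α × γ) (α × γ) ℂ) {ψ : β × δ → ℂ} (hψ : IsUnitVec ψ) :
    entFormationSet ((ρ ⊗ₖ pureState ψ).submatrix σ σ) ⊆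
      (· + entEntropy ψ) '' entFormationSet ρ := by
  rintro _ ⟨m, q, Φ, hq, hq1, hΦ, hdec, rfl⟩
  have hdec' : ρ ⊗ₖ pureState ψ = ∑ j, (q j : ℂ) • pureState (Φ j ∘ (σ).symm) := by
    rw [← submatrix_sum_smul_pureState, ← hdec, submatrix_submatrix, Equiv.self_comp_symm,
      submatrix_id_id]
  obtain ⟨u, hu⟩ := exists_isUnitVec (n := α × γ)
  -- terms of weight zero need not factorize; any unit vector can replace them
  let φ : Fin m → α × γ → ℂ := fun j => if q j = 0 then u else innerSnd ψ (Φ j ∘ (σ).symm)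
  have hfactor : ∀ j, q j ≠ 0 → Φ j ∘ (σ).symm = vecKron (φ j) ψ := fun j hj => by
    simpa only [φ, if_neg hj] using eq_vecKron_innerSnd_of_kronecker_pureState_eq_sum hψ hq hdec' hj
  have hφ : ∀ j, IsUnitVec (φ j) := fun j => by
    by_cases hj : q j = 0
    · simpa only [φ, if_pos hj] using hu
    · have h := (hΦ j).comp_equiv (σ).symm
      rw [hfactor j hj] at h
      exact h.of_vecKron hψ
  have hterm : ∀ j, (q j : ℂ) • pureState (Φ j ∘ (σ).symm) =
      (q j : ℂ) • pureState (vecKron (φ j) ψ) := fun j => by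
    by_cases hj : q j = 0
    · simp [hj]
    · rw [hfactor j hj]
  have hρ : ρ = ∑ j, (q j : ℂ) • pureState (φ j) := by
    rw [Finset.sum_congr rfl fun j _ => hterm j, ← sum_smul_pureState_kronecker_pureState] at hdec'
    exact eq_of_kronecker_pureState_eq hψ hdec'
  refine ⟨_, ⟨m, q, φ, hq, hq1, hφ, hρ, rfl⟩, ?_⟩
  show _ + _ = _
  rw [← sum_mul_entEntropy_vecKron_comp_prodProdProdComm hq1 hφ hψ]
  refine Finset.sum_congr rfl fun j _ => ?_
  by_cases hj : q j = 0
  · simp [hj]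
  · rw [← hfactor j hj, Function.comp_assoc, Equiv.symm_comp_self, Function.comp_id]

theorem entFormation_submatrix_kronecker_pureState {ρ : Matrix (α × γ) (α × γ) ℂ}
    (hρ : IsDensityMatrix ρ) {ψ : β × δ → ℂ} (hψ : IsUnitVec ψ) :
    entFormation ((ρ ⊗ₖ pureState ψ).submatrix σ σ) = entFormation ρ + entEntropy ψ := by
  have : Nonempty (α × γ) := by
    by_contra h
    rw [not_nonempty_iff] at h
    simpa [Matrix.trace] using hρ.2
  rw [entFormation_eq_sInf, entFormation_eq_sInf,
    (image_add_entEntropy_subset_entFormationSet ρ hψ).antisymm'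
      (entFormationSet_subset_image_add_entEntropy ρ hψ)]
  exact ((OrderIso.addRight _).map_csInf' hρ.entFormationSet_nonempty
    (entFormationSet_bddBelow ρ)).symm

end ProductWithPureState

theorem entFormation_product_state_general
    {p s b r1 r2 : Type*} [Fintype p] [Fintype s] [Fintype b] [Fintype r1] [Fintype r2]
    [DecidableEq s] [DecidableEq b]
    (ψ1 : p × (s × r1) → ℂ) (hψ1 : IsUnitVec ψ1)
    (ψ2 : b × r2 → ℂ) (hψ2 : IsUnitVec ψ2)
    (Ψ : p × ((s × r1) × (b × r2)) → ℂ)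
    (hΨ : ∀ (pi : p) (x : s × r1) (y : b × r2), Ψ (pi, (x, y)) = ψ1 (pi, x) * ψ2 y) :
    trFst (pureState Ψ) = (trFst (pureState ψ1)) ⊗ₖ pureState ψ2 ∧
    entFormation
      (Matrix.submatrix (trFst (pureState Ψ))
        (fun x : (s × b) × (r1 × r2) => ((x.1.1, x.2.1), (x.1.2, x.2.2)))
        (fun x : (s × b) × (r1 × r2) => ((x.1.1, x.2.1), (x.1.2, x.2.2)))) =
      entFormation (trFst (pureState ψ1)) + vnEntropy (trSnd (pureState ψ2)) := by
  have hreduced : trFst (pureState Ψ) = trFst (pureState ψ1) ⊗ₖ pureState ψ2 :=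
    trFst_pureState_eq_kronecker hΨ
  refine ⟨hreduced, ?_⟩
  rw [hreduced]
  exact entFormation_submatrix_kronecker_pureState (isDensityMatrix_trFst_pureState hψ1) hψ2

/-- for a product pure state `|Ψ⟩ = |ψ_{PSR1}⟩ ⊗ |ψ_{BR2}⟩`, the
partial trace over `P` factorizes, and the entanglement of formation between
`S⊗B` and `R1⊗R2` equals `E_F^{S-R1}(tr_P|ψ_{PSR1}⟩⟨ψ_{PSR1}|) +
S(tr_{R2}|ψ_{BR2}⟩⟨ψ_{BR2}|)`. -/
theorem entFormation_product_state
    {p s b r1 r2 : Type*} [Fintype p] [Fintype s] [Fintype b] [Fintype r1] [Fintype r2]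
    [DecidableEq p] [DecidableEq s] [DecidableEq b] [DecidableEq r1] [DecidableEq r2]
    (ψ1 : p × (s × r1) → ℂ) (hψ1 : IsUnitVec ψ1)
    (ψ2 : b × r2 → ℂ) (hψ2 : IsUnitVec ψ2)
    (Ψ : p × ((s × r1) × (b × r2)) → ℂ)
    (hΨ : ∀ (pi : p) (x : s × r1) (y : b × r2), Ψ (pi, (x, y)) = ψ1 (pi, x) * ψ2 y) :
    trFst (pureState Ψ) = (trFst (pureState ψ1)) ⊗ₖ pureState ψ2 ∧
    entFormation
      (Matrix.submatrix (trFst (pureState Ψ))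
        (fun x : (s × b) × (r1 × r2) => ((x.1.1, x.2.1), (x.1.2, x.2.2)))
        (fun x : (s × b) × (r1 × r2) => ((x.1.1, x.2.1), (x.1.2, x.2.2)))) =
      entFormation (trFst (pureState ψ1)) + vnEntropy (trSnd (pureState ψ2)) :=
  entFormation_product_state_general ψ1 hψ1 ψ2 hψ2 Ψ hΨ
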